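/- Let f: {0,1}^d → [0,1] be monotone with I(f) ≤ K for some K ≥ 1, fix ε ∈ (0, 1/2], let γ > 2 log 3, set d_0 := ⌈K/(2ε)⌉ and δ := e^{-γ d_0}, and suppose K/(4 d_0) ≤ ε/2 and (K/12)(3 e^{-γ/2})^{d_0} ≤ ε/2. Then the function g := ∑_{S ⊆ J, |S| ≤ d_0} f̂(S) χ_S, where J := {i : I_i(f) ≥ δ}, satisfies ‖f - g‖_2² ≤ ε and g depends only on the coordinates in J, with |J| ≤ K e^{γ d_0}. -/

import Mathlib

/-!
By Parseval, `‖f - g‖₂²` is the Fourier weight of `f` outside `{S ⊆ J, |S| ≤ d₀}`. Since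
`∑ |S| f̂(S)² = ¼ ∑ᵢ E[(Δᵢ f)²]`, the weight above degree `d₀` is at most `I⁽²⁾(f) / (4 d₀)`.
A low-degree `S ⊄ J` contains some `i ∉ J`, and the weight of such `S ∋ i` is a quarter of the
low-degree weight of `Δᵢ f`. Monotonicity makes `0 ≤ Δᵢ f ≤ 1`, so hypercontractivity (Bonami's
lemma and Hölder) gives `∑_T 3^{-|T|} (Δᵢ f)^(T)² ≤ Iᵢ(f)^{3/2} ≤ δ^{1/2} Iᵢ(f)`; summing over
`i ∉ J` yields the term `K 3^{d₀} δ^{1/2} / 12`. Markov's inequality bounds `|J|`, and `g` is a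
combination of characters `χ_S` with `S ⊆ J`.
-/

open Finset

/-- Expectation of `g` under the uniform measure on `{0,1}^d`. -/
noncomputable def unifE (d : ℕ) (g : (Fin d → Bool) → ℝ) : ℝ :=
  (∑ x : Fin d → Bool, g x) / 2 ^ d

/-- Discrete derivative `Δ_i f (x) = f(x^{i→1}) - f(x^{i→0})`. -/
def disc (d : ℕ) (f : (Fin d → Bool) → ℝ) (i : Fin d) (x : Fin d → Bool) : ℝ :=
  f (Function.update x i true) - f (Function.update x i false)

/-- Coordinatewise monotone on the hypercube. -/
def BMono (d : ℕ) (f : (Fin d → Bool) → ℝ) : Prop :=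
  ∀ x y : Fin d → Bool, (∀ i, x i ≤ y i) → f x ≤ f y

/-- Fourier character `χ_S(x) = ∏_{i∈S} (2 x_i - 1)`. -/
def chi (d : ℕ) (S : Finset (Fin d)) (x : Fin d → Bool) : ℝ :=
  ∏ i ∈ S, (if x i then (1 : ℝ) else -1)

/-- Fourier coefficient `f̂(S) = E[f(X) χ_S(X)]`. -/
noncomputable def fhat (d : ℕ) (f : (Fin d → Bool) → ℝ) (S : Finset (Fin d)) : ℝ :=
  unifE d (fun x => f x * chi d S x)


section Expectation

variable {d : ℕ}

lemma unifE_const (c : ℝ) : unifE d (fun _ => c) = c := by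
  simp [unifE]

lemma unifE_mono {u v : (Fin d → Bool) → ℝ} (h : ∀ x, u x ≤ v x) : unifE d u ≤ unifE d v :=
  div_le_div_of_nonneg_right (sum_le_sum fun x _ => h x) (by positivity)

lemma unifE_nonneg {u : (Fin d → Bool) → ℝ} (h : ∀ x, 0 ≤ u x) : 0 ≤ unifE d u :=
  div_nonneg (sum_nonneg fun x _ => h x) (by positivity)

lemma unifE_add (u v : (Fin d → Bool) → ℝ) :
    unifE d (fun x => u x + v x) = unifE d u + unifE d v := by
  rw [unifE, sum_add_distrib, add_div, unifE, unifE]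

lemma unifE_const_mul (c : ℝ) (u : (Fin d → Bool) → ℝ) :
    unifE d (fun x => c * u x) = c * unifE d u := by
  rw [unifE, ← mul_sum, mul_div_assoc, unifE]

lemma unifE_sum {ι : Type*} (s : Finset ι) (u : ι → (Fin d → Bool) → ℝ) :
    unifE d (fun x => ∑ j ∈ s, u j x) = ∑ j ∈ s, unifE d (u j) := by
  rw [unifE, sum_comm, sum_div]
  rfl

lemma unifE_sq_le_mul_of_sq_le_mul {r p q : (Fin d → Bool) → ℝ} (hp : ∀ x, 0 ≤ p x)
    (hq : ∀ x, 0 ≤ q x) (h : ∀ x, r x ^ 2 ≤ p x * q x) :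
    unifE d r ^ 2 ≤ unifE d p * unifE d q := by
  rw [unifE, unifE, unifE, div_pow, div_mul_div_comm, ← sq]
  gcongr
  exact sum_sq_le_sum_mul_sum_of_sq_le_mul _ (fun x _ => hp x) (fun x _ => hq x) fun x _ => h x

end Expectation

-- `chi d S x = ∏ i ∈ S, boolSign (x i)` holds definitionally.
def boolSign (b : Bool) : ℝ := if b then 1 else -1

lemma boolSign_mul_self (b : Bool) : boolSign b * boolSign b = 1 := by
  cases b <;> norm_num [boolSign]

lemma boolSign_not (b : Bool) : boolSign (!b) = -boolSign b := by
  cases b <;> norm_num [boolSign]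

section Characters

open scoped symmDiff

variable {d : ℕ}

lemma chi_empty : chi d ∅ = fun _ => 1 :=
  funext fun _ => prod_empty

lemma chi_insert {S : Finset (Fin d)} {i : Fin d} (hi : i ∉ S) (x : Fin d → Bool) :
    chi d (insert i S) x = boolSign (x i) * chi d S x :=
  prod_insert hi

lemma dependsOn_chi (S : Finset (Fin d)) : DependsOn (chi d S) S :=
  fun x y h => prod_congr rfl fun i hi => by rw [h i hi]

lemma dependsOn_sum_chi {J : Set (Fin d)} {s : Finset (Finset (Fin d))}
    (hs : ∀ S ∈ s, (S : Set (Fin d)) ⊆ J) (c : Finset (Fin d) → ℝ) :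
    DependsOn (fun x => ∑ S ∈ s, c S * chi d S x) J :=
  fun x y h => sum_congr rfl fun S hS => by
    rw [(dependsOn_chi S).mono (hs S hS) h]

lemma chi_update_of_notMem {S : Finset (Fin d)} {i : Fin d} (hi : i ∉ S) (x : Fin d → Bool)
    (b : Bool) : chi d S (Function.update x i b) = chi d S x :=
  dependsOn_chi S fun j hj => Function.update_of_ne (by rintro rfl; exact hi hj) b x

lemma sum_comp_flip {M : Type*} [AddCommMonoid M] (i : Fin d) (F : (Fin d → Bool) → M) :
    ∑ x, F (Function.update x i (!x i)) = ∑ x, F x := by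
  refine Fintype.sum_bijective _ (Function.Involutive.bijective fun x => ?_) _ _ fun _ => rfl
  simp

lemma unifE_boolSign_mul_eq_zero {R : (Fin d → Bool) → ℝ} {i : Fin d}
    (hR : DependsOn R ({i}ᶜ : Set (Fin d))) : unifE d (fun x => boolSign (x i) * R x) = 0 := by
  have hflip : ∀ x, boolSign (Function.update x i (!x i) i) * R (Function.update x i (!x i))
      = -(boolSign (x i) * R x) := fun x => by
    rw [Function.update_self, boolSign_not, hR fun j hj => Function.update_of_ne hj _ x]
    ring
  have h := sum_comp_flip i fun x => boolSign (x i) * R x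
  simp only [hflip, sum_neg_distrib] at h
  rw [unifE, show ∑ x, boolSign (x i) * R x = 0 by linarith, zero_div]

lemma unifE_chi (S : Finset (Fin d)) : unifE d (chi d S) = if S = ∅ then 1 else 0 := by
  rcases S.eq_empty_or_nonempty with rfl | ⟨i, hi⟩
  · rw [if_pos rfl, chi_empty, unifE_const]
  · rw [if_neg (nonempty_iff_ne_empty.1 ⟨i, hi⟩),
      show chi d S = fun x => boolSign (x i) * chi d (S.erase i) x from
        funext fun x => (mul_prod_erase S _ hi).symm]
    refine unifE_boolSign_mul_eq_zero ((dependsOn_chi _).mono ?_)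
    simp

lemma chi_eq_prod_univ (S : Finset (Fin d)) (x : Fin d → Bool) :
    chi d S x = ∏ i, if i ∈ S then boolSign (x i) else 1 := by
  rw [prod_ite_mem, univ_inter]
  rfl

lemma chi_mul_chi (S T : Finset (Fin d)) (x : Fin d → Bool) :
    chi d S x * chi d T x = chi d (S ∆ T) x := by
  simp only [chi_eq_prod_univ, ← prod_mul_distrib]
  refine prod_congr rfl fun i _ => ?_
  by_cases hS : i ∈ S <;> by_cases hT : i ∈ T <;> simp [hS, hT, mem_symmDiff, boolSign_mul_self]

lemma unifE_chi_mul_chi (S T : Finset (Fin d)) :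
    unifE d (fun x => chi d S x * chi d T x) = if S = T then 1 else 0 := by
  rw [show (fun x => chi d S x * chi d T x) = chi d (S ∆ T) from funext (chi_mul_chi S T),
    unifE_chi]
  exact if_congr (by rw [← bot_eq_empty, symmDiff_eq_bot]) rfl rfl

lemma unifE_mul_sum_chi (u : (Fin d → Bool) → ℝ) (s : Finset (Finset (Fin d)))
    (c : Finset (Fin d) → ℝ) :
    unifE d (fun x => u x * ∑ T ∈ s, c T * chi d T x) = ∑ T ∈ s, c T * fhat d u T := by
  simp only [mul_sum, mul_left_comm (u _)]
  rw [unifE_sum]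
  exact sum_congr rfl fun T _ => unifE_const_mul _ _

lemma fhat_sum_chi (s : Finset (Finset (Fin d))) (c : Finset (Fin d) → ℝ) (S : Finset (Fin d)) :
    fhat d (fun x => ∑ T ∈ s, c T * chi d T x) S = if S ∈ s then c S else 0 := by
  rw [fhat]
  simp only [mul_comm _ (chi d S _)]
  rw [unifE_mul_sum_chi]
  simp only [fhat, unifE_chi_mul_chi, mul_ite, mul_one, mul_zero, sum_ite_eq]

lemma unifE_sq_sum_chi (s : Finset (Finset (Fin d))) (c : Finset (Fin d) → ℝ) :
    unifE d (fun x => (∑ T ∈ s, c T * chi d T x) ^ 2) = ∑ T ∈ s, c T ^ 2 := by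
  simp only [sq]
  rw [unifE_mul_sum_chi]
  exact sum_congr rfl fun T hT => by rw [fhat_sum_chi, if_pos hT]

lemma sum_chi_mul_chi (x y : Fin d → Bool) :
    ∑ S, chi d S x * chi d S y = if x = y then 2 ^ d else 0 := by
  have hfactor : ∀ i, 1 + boolSign (x i) * boolSign (y i) = if x i = y i then 2 else 0 := by
    intro i
    cases x i <;> cases y i <;> norm_num [boolSign]
  calc ∑ S, chi d S x * chi d S y
      = ∑ S ∈ univ.powerset, ∏ i ∈ S, boolSign (x i) * boolSign (y i) := by
        rw [powerset_univ]
        exact sum_congr rfl fun S _ => prod_mul_distrib.symm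
    _ = ∏ i, (1 + boolSign (x i) * boolSign (y i)) := (prod_one_add _).symm
    _ = if x = y then 2 ^ d else 0 := by
        simp [hfactor, prod_ite_zero, funext_iff]

theorem fourier_expansion (f : (Fin d → Bool) → ℝ) (x : Fin d → Bool) :
    ∑ S, fhat d f S * chi d S x = f x := by
  simp only [fhat, unifE, div_mul_eq_mul_div, sum_mul, ← sum_div]
  rw [sum_comm]
  simp only [mul_assoc, ← mul_sum, sum_chi_mul_chi]
  simp

end Characters

section Powerset

variable {α : Type*} [Fintype α] [DecidableEq α]

lemma Finset.sum_eq_sum_powerset_erase {M : Type*} [AddCommMonoid M] (i : α)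
    (F : Finset α → M) :
    ∑ S, F S = ∑ T ∈ (univ.erase i).powerset, (F T + F (insert i T)) := by
  rw [sum_add_distrib, ← sum_powerset_insert (notMem_erase i univ), insert_erase (mem_univ i),
    powerset_univ]

lemma Finset.sum_filter_mem_eq_sum_powerset_erase {M : Type*} [AddCommMonoid M] (i : α)
    (F : Finset α → M) :
    ∑ S with i ∈ S, F S = ∑ T ∈ (univ.erase i).powerset, F (insert i T) := by
  rw [sum_filter, sum_eq_sum_powerset_erase i]
  refine sum_congr rfl fun T hT => ?_
  rw [if_neg (subset_erase.1 (mem_powerset.1 hT)).2, if_pos (mem_insert_self i T), zero_add]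

lemma Finset.sum_card_mul (F : Finset α → ℝ) :
    ∑ S, (S.card : ℝ) * F S = ∑ i, ∑ S with i ∈ S, F S := by
  simp only [sum_filter]
  rw [sum_comm]
  refine sum_congr rfl fun S _ => ?_
  rw [sum_ite_mem, univ_inter, sum_const, nsmul_eq_mul]

end Powerset

section Derivative

variable {d : ℕ}

lemma disc_eq_sum_chi (f : (Fin d → Bool) → ℝ) (i : Fin d) (x : Fin d → Bool) :
    disc d f i x = ∑ T ∈ (univ.erase i).powerset, 2 * fhat d f (insert i T) * chi d T x := by
  rw [disc, ← fourier_expansion f, ← fourier_expansion f, ← sum_sub_distrib,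
    sum_eq_sum_powerset_erase i]
  refine sum_congr rfl fun T hT => ?_
  have hiT : i ∉ T := (subset_erase.1 (mem_powerset.1 hT)).2
  simp only [chi_insert hiT, chi_update_of_notMem hiT, Function.update_self, boolSign,
    ↓reduceIte, Bool.false_eq_true]
  ring

lemma fhat_disc (f : (Fin d → Bool) → ℝ) (i : Fin d) (T : Finset (Fin d)) :
    fhat d (disc d f i) T =
      if T ∈ (univ.erase i).powerset then 2 * fhat d f (insert i T) else 0 := by
  rw [show disc d f i = _ from funext (disc_eq_sum_chi f i), fhat_sum_chi]

lemma unifE_disc_sq (f : (Fin d → Bool) → ℝ) (i : Fin d) :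
    unifE d (fun x => disc d f i x ^ 2) = 4 * ∑ S with i ∈ S, fhat d f S ^ 2 := by
  simp only [disc_eq_sum_chi]
  rw [unifE_sq_sum_chi, sum_filter_mem_eq_sum_powerset_erase, mul_sum]
  exact sum_congr rfl fun T _ => by ring

theorem sum_card_mul_fhat_sq (f : (Fin d → Bool) → ℝ) :
    ∑ S, (S.card : ℝ) * fhat d f S ^ 2 = (∑ i, unifE d (fun x => disc d f i x ^ 2)) / 4 := by
  simp only [sum_card_mul, unifE_disc_sq, ← mul_sum]
  ring

lemma mul_sum_fhat_sq_card_ge_le (f : (Fin d → Bool) → ℝ) (m : ℕ) :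
    m * ∑ S with m ≤ S.card, fhat d f S ^ 2 ≤ (∑ i, unifE d (fun x => disc d f i x ^ 2)) / 4 := by
  rw [← sum_card_mul_fhat_sq, mul_sum]
  calc ∑ S with m ≤ S.card, (m : ℝ) * fhat d f S ^ 2
      ≤ ∑ S with m ≤ S.card, (S.card : ℝ) * fhat d f S ^ 2 :=
        sum_le_sum fun S hS => by gcongr; exact (mem_filter.1 hS).2
    _ ≤ ∑ S, (S.card : ℝ) * fhat d f S ^ 2 :=
        sum_le_sum_of_subset_of_nonneg (filter_subset _ _) fun _ _ _ => by positivity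

lemma disc_mem_Icc {f : (Fin d → Bool) → ℝ} (hf : ∀ x, f x ∈ Set.Icc (0 : ℝ) 1)
    (hmono : BMono d f) (i : Fin d) (x : Fin d → Bool) : disc d f i x ∈ Set.Icc (0 : ℝ) 1 := by
  refine ⟨sub_nonneg.2 (hmono _ _ fun j => ?_), ?_⟩
  · by_cases hj : j = i
    · subst hj
      simp
    · simp [Function.update_of_ne hj]
  · rw [disc]
    linarith [(hf (Function.update x i true)).2, (hf (Function.update x i false)).1]

end Derivative

section Hypercontractivity

variable {d : ℕ}

lemma unifE_add_boolSign_mul_pow_four {P Q : (Fin d → Bool) → ℝ} {i : Fin d}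
    (hP : DependsOn P ({i}ᶜ : Set (Fin d))) (hQ : DependsOn Q ({i}ᶜ : Set (Fin d))) :
    unifE d (fun x => (P x + boolSign (x i) * Q x) ^ 4)
      = unifE d (fun x => P x ^ 4) + 6 * unifE d (fun x => P x ^ 2 * Q x ^ 2)
        + unifE d (fun x => Q x ^ 4) := by
  have hodd : DependsOn (fun x => 4 * P x ^ 3 * Q x + 4 * P x * Q x ^ 3)
      ({i}ᶜ : Set (Fin d)) := fun x y h => by simp only [hP h, hQ h]
  have hexpand : ∀ x, (P x + boolSign (x i) * Q x) ^ 4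
      = ((P x ^ 4 + 6 * (P x ^ 2 * Q x ^ 2)) + Q x ^ 4)
        + boolSign (x i) * (4 * P x ^ 3 * Q x + 4 * P x * Q x ^ 3) := fun x => by
    linear_combination (6 * P x ^ 2 * Q x ^ 2 + 4 * boolSign (x i) * P x * Q x ^ 3
      + (boolSign (x i) * boolSign (x i) + 1) * Q x ^ 4) * boolSign_mul_self (x i)
  simp only [hexpand]
  rw [unifE_add, unifE_boolSign_mul_eq_zero hodd, add_zero, unifE_add, unifE_add, unifE_const_mul]

theorem bonami (A : Finset (Fin d)) (b : Finset (Fin d) → ℝ) :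
    unifE d (fun x => (∑ T ∈ A.powerset, b T * chi d T x) ^ 4)
      ≤ (∑ T ∈ A.powerset, 3 ^ T.card * b T ^ 2) ^ 2 := by
  induction A using Finset.induction_on generalizing b with
  | empty =>
    simp only [powerset_empty, sum_singleton, card_empty, pow_zero, one_mul, chi_empty, mul_one,
      unifE_const]
    exact le_of_eq (by ring)
  | @insert i A hiA ih =>
    set P := fun x => ∑ T ∈ A.powerset, b T * chi d T x
    set Q := fun x => ∑ T ∈ A.powerset, b (insert i T) * chi d T x
    set α := ∑ T ∈ A.powerset, 3 ^ T.card * b T ^ 2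
    set β := ∑ T ∈ A.powerset, 3 ^ T.card * b (insert i T) ^ 2
    have hiT : ∀ T ∈ A.powerset, i ∉ T := fun T hT hi => hiA (mem_powerset.1 hT hi)
    have hsplit : ∀ x, ∑ T ∈ (insert i A).powerset, b T * chi d T x
        = P x + boolSign (x i) * Q x := fun x => by
      rw [sum_powerset_insert hiA, mul_sum]
      exact congrArg _ (sum_congr rfl fun T hT => by rw [chi_insert (hiT T hT)]; ring)
    have hweights : ∑ T ∈ (insert i A).powerset, 3 ^ T.card * b T ^ 2 = α + 3 * β := by
      rw [sum_powerset_insert hiA, mul_sum]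
      exact congrArg _ (sum_congr rfl fun T hT => by rw [card_insert_of_notMem (hiT T hT)]; ring)
    have hindep : ∀ c : Finset (Fin d) → ℝ,
        DependsOn (fun x => ∑ T ∈ A.powerset, c T * chi d T x) ({i}ᶜ : Set (Fin d)) :=
      dependsOn_sum_chi fun T hT => by simpa using hiT T hT
    have hP4 : unifE d (fun x => P x ^ 4) ≤ α ^ 2 := ih b
    have hQ4 : unifE d (fun x => Q x ^ 4) ≤ β ^ 2 := ih fun T => b (insert i T)
    have hα : 0 ≤ α := sum_nonneg fun T _ => by positivity
    have hβ : 0 ≤ β := sum_nonneg fun T _ => by positivity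
    have hmixed : unifE d (fun x => P x ^ 2 * Q x ^ 2) ≤ α * β := by
      refine (sq_le_sq₀ (unifE_nonneg fun x => by positivity) (mul_nonneg hα hβ)).1 ?_
      calc unifE d (fun x => P x ^ 2 * Q x ^ 2) ^ 2
          ≤ unifE d (fun x => P x ^ 4) * unifE d (fun x => Q x ^ 4) :=
            unifE_sq_le_mul_of_sq_le_mul (fun x => by positivity) (fun x => by positivity)
              fun x => le_of_eq (by ring)
        _ ≤ α ^ 2 * β ^ 2 :=
            mul_le_mul hP4 hQ4 (unifE_nonneg fun x => by positivity) (sq_nonneg α)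
        _ = (α * β) ^ 2 := by ring
    calc unifE d (fun x => (∑ T ∈ (insert i A).powerset, b T * chi d T x) ^ 4)
        = unifE d (fun x => P x ^ 4) + 6 * unifE d (fun x => P x ^ 2 * Q x ^ 2)
          + unifE d (fun x => Q x ^ 4) := by
          simp only [hsplit]
          exact unifE_add_boolSign_mul_pow_four (hindep b) (hindep _)
      _ ≤ α ^ 2 + 6 * (α * β) + β ^ 2 := by gcongr
      _ ≤ (α + 3 * β) ^ 2 := by nlinarith
      _ = _ := by rw [hweights]

/-- Hölder with exponents `4/3` and `4` against `G = ∑ 3^{-|T|} ĥ(T) χ_T`, whose fourth moment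
Bonami's lemma bounds; `0 ≤ h ≤ 1` gives `‖h‖_{4/3} ≤ (E h)^{3/4}`. -/
theorem sq_sum_fhat_sq_div_three_pow_le {h : (Fin d → Bool) → ℝ}
    (hh : ∀ x, h x ∈ Set.Icc (0 : ℝ) 1) :
    (∑ T, fhat d h T ^ 2 / 3 ^ T.card) ^ 2 ≤ unifE d h ^ 3 := by
  set t := ∑ T, fhat d h T ^ 2 / 3 ^ T.card
  set G := fun x => ∑ T, fhat d h T / 3 ^ T.card * chi d T x
  set μ := unifE d h
  have ht : 0 ≤ t := sum_nonneg fun T _ => by positivity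
  have hμ : 0 ≤ μ := unifE_nonneg fun x => (hh x).1
  have hhG : unifE d (fun x => h x * G x) = t := by
    rw [unifE_mul_sum_chi]
    exact sum_congr rfl fun T _ => by ring
  have hG4 : unifE d (fun x => G x ^ 4) ≤ t ^ 2 := by
    have hb := bonami univ fun T => fhat d h T / 3 ^ T.card
    rw [powerset_univ] at hb
    refine hb.trans_eq (congrArg (· ^ 2) (sum_congr rfl fun T _ => ?_))
    field_simp
  have hCS1 : t ^ 2 ≤ μ * unifE d (fun x => h x * G x ^ 2) :=
    hhG ▸ unifE_sq_le_mul_of_sq_le_mul (fun x => (hh x).1)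
      (fun x => mul_nonneg (hh x).1 (sq_nonneg _)) fun x => le_of_eq (by ring)
  have hCS2 : unifE d (fun x => h x * G x ^ 2) ^ 2 ≤ μ * t ^ 2 := by
    refine (unifE_sq_le_mul_of_sq_le_mul (q := fun x => G x ^ 4) (fun x => (hh x).1)
      (fun x => by positivity) fun x => ?_).trans (by gcongr)
    have : h x ^ 2 ≤ h x := by nlinarith [(hh x).1, (hh x).2]
    calc (h x * G x ^ 2) ^ 2 = h x ^ 2 * G x ^ 4 := by ring
      _ ≤ h x * G x ^ 4 := by gcongr
  have hfour : t ^ 2 * t ^ 2 ≤ μ ^ 3 * t ^ 2 := by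
    calc t ^ 2 * t ^ 2 ≤ (μ * unifE d (fun x => h x * G x ^ 2)) ^ 2 := by
          rw [← sq]; gcongr
      _ = μ ^ 2 * unifE d (fun x => h x * G x ^ 2) ^ 2 := by ring
      _ ≤ μ ^ 2 * (μ * t ^ 2) := by gcongr
      _ = μ ^ 3 * t ^ 2 := by ring
  rcases ht.eq_or_lt with h0 | hpos
  · simpa [← h0] using pow_nonneg hμ 3
  · exact le_of_mul_le_mul_right hfour (by positivity)

end Hypercontractivity

section Concentration

variable {d : ℕ} {f : (Fin d → Bool) → ℝ}

lemma sum_fhat_sq_div_three_pow_disc (f : (Fin d → Bool) → ℝ) (i : Fin d) :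
    ∑ T, fhat d (disc d f i) T ^ 2 / 3 ^ T.card
      = ∑ T ∈ (univ.erase i).powerset, (2 * fhat d f (insert i T)) ^ 2 / 3 ^ T.card := by
  simp only [fhat_disc, ite_pow, ne_eq, OfNat.ofNat_ne_zero, not_false_eq_true, zero_pow, ite_div,
    zero_div]
  rw [sum_ite_mem, univ_inter]

lemma sum_fhat_sq_mem_card_le {i : Fin d} (hΔ : ∀ x, disc d f i x ∈ Set.Icc (0 : ℝ) 1)
    (k : ℕ) {η : ℝ} (hη : 0 ≤ η) (hIi : unifE d (disc d f i) ≤ η ^ 2) :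
    ∑ S with i ∈ S ∧ S.card ≤ k + 1, fhat d f S ^ 2 ≤ 3 ^ k / 4 * (η * unifE d (disc d f i)) := by
  set μ := unifE d (disc d f i)
  set t := ∑ T, fhat d (disc d f i) T ^ 2 / 3 ^ T.card
  have hμ : 0 ≤ μ := unifE_nonneg fun x => (hΔ x).1
  have ht : t ≤ η * μ := by
    refine (sq_le_sq₀ (sum_nonneg fun T _ => by positivity) (mul_nonneg hη hμ)).1 ?_
    calc t ^ 2 ≤ μ ^ 3 := sq_sum_fhat_sq_div_three_pow_le hΔ
      _ = μ * μ ^ 2 := by ring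
      _ ≤ η ^ 2 * μ ^ 2 := by gcongr
      _ = (η * μ) ^ 2 := by ring
  rw [← filter_filter, sum_filter, sum_filter_mem_eq_sum_powerset_erase]
  calc ∑ T ∈ (univ.erase i).powerset,
        (if (insert i T).card ≤ k + 1 then fhat d f (insert i T) ^ 2 else 0)
      ≤ ∑ T ∈ (univ.erase i).powerset,
          3 ^ k / 4 * ((2 * fhat d f (insert i T)) ^ 2 / 3 ^ T.card) := by
        refine sum_le_sum fun T hT => ?_
        split_ifs with hcard
        · rw [card_insert_of_notMem (subset_erase.1 (mem_powerset.1 hT)).2] at hcard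
          have h3 : (1 : ℝ) ≤ 3 ^ k / 3 ^ T.card :=
            (one_le_div (by positivity)).2 (pow_le_pow_right₀ (by norm_num) (by omega))
          calc fhat d f (insert i T) ^ 2 = fhat d f (insert i T) ^ 2 * 1 := (mul_one _).symm
            _ ≤ fhat d f (insert i T) ^ 2 * (3 ^ k / 3 ^ T.card) := by gcongr
            _ = _ := by ring
        · positivity
    _ = 3 ^ k / 4 * t := by rw [← mul_sum, ← sum_fhat_sq_div_three_pow_disc]
    _ ≤ 3 ^ k / 4 * (η * μ) := by gcongr

lemma sum_fhat_sq_low_not_subset_le (hΔ : ∀ i x, disc d f i x ∈ Set.Icc (0 : ℝ) 1) (k : ℕ)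
    (J : Finset (Fin d)) {η : ℝ} (hη : 0 ≤ η) (hJ : ∀ i ∉ J, unifE d (disc d f i) ≤ η ^ 2) :
    ∑ S with ¬S ⊆ J ∧ S.card ≤ k + 1, fhat d f S ^ 2
      ≤ 3 ^ k / 4 * (η * ∑ i, unifE d (disc d f i)) := by
  have hI : ∀ i, 0 ≤ unifE d (disc d f i) := fun i => unifE_nonneg fun x => (hΔ i x).1
  calc ∑ S with ¬S ⊆ J ∧ S.card ≤ k + 1, fhat d f S ^ 2
      ≤ ∑ S with ¬S ⊆ J ∧ S.card ≤ k + 1, ∑ _i ∈ S \ J, fhat d f S ^ 2 := by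
        refine sum_le_sum fun S hS => ?_
        obtain ⟨i, hiS, hiJ⟩ := not_subset.1 (mem_filter.1 hS).2.1
        exact single_le_sum (f := fun _ => fhat d f S ^ 2) (fun _ _ => sq_nonneg _)
          (mem_sdiff.2 ⟨hiS, hiJ⟩)
    _ = ∑ i ∈ Jᶜ, ∑ S with i ∈ S ∧ S.card ≤ k + 1, fhat d f S ^ 2 :=
        sum_comm' fun S i => by
          simp only [mem_filter, mem_univ, true_and, mem_sdiff, mem_compl, not_subset]
          constructor
          · rintro ⟨⟨_, hcard⟩, hiS, hiJ⟩
            exact ⟨⟨hiS, hcard⟩, hiJ⟩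
          · rintro ⟨⟨hiS, hcard⟩, hiJ⟩
            exact ⟨⟨⟨i, hiS, hiJ⟩, hcard⟩, hiS, hiJ⟩
    _ ≤ ∑ i ∈ Jᶜ, 3 ^ k / 4 * (η * unifE d (disc d f i)) :=
        sum_le_sum fun i hi => sum_fhat_sq_mem_card_le (hΔ i) k hη (hJ i (mem_compl.1 hi))
    _ ≤ ∑ i, 3 ^ k / 4 * (η * unifE d (disc d f i)) :=
        sum_le_sum_of_subset_of_nonneg (subset_univ _) fun i _ _ =>
          mul_nonneg (by positivity) (mul_nonneg hη (hI i))
    _ = 3 ^ k / 4 * (η * ∑ i, unifE d (disc d f i)) := by rw [mul_sum, mul_sum]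

theorem sum_fhat_sq_not_low_subset_le (hΔ : ∀ i x, disc d f i x ∈ Set.Icc (0 : ℝ) 1)
    {K : ℝ} (hI : ∑ i, unifE d (disc d f i) ≤ K) (k : ℕ) (J : Finset (Fin d)) {η : ℝ}
    (hη : 0 ≤ η) (hJ : ∀ i ∉ J, unifE d (disc d f i) ≤ η ^ 2) :
    ∑ S with ¬(S ⊆ J ∧ S.card ≤ k + 1), fhat d f S ^ 2
      ≤ K / (4 * (k + 1)) + K / 12 * (3 ^ (k + 1) * η) := by
  have hI2 : ∑ i, unifE d (fun x => disc d f i x ^ 2) ≤ K :=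
    (sum_le_sum fun i _ => unifE_mono fun x => by nlinarith [(hΔ i x).1, (hΔ i x).2]).trans hI
  have hhigh : ∑ S with k + 1 ≤ S.card, fhat d f S ^ 2 ≤ K / (4 * (k + 1)) := by
    rw [le_div_iff₀ (by positivity)]
    have := mul_sum_fhat_sq_card_ge_le f (k + 1)
    push_cast at this
    linarith
  have hlow : ∑ S with ¬S ⊆ J ∧ S.card ≤ k + 1, fhat d f S ^ 2 ≤ K / 12 * (3 ^ (k + 1) * η) :=
    calc _ ≤ 3 ^ k / 4 * (η * ∑ i, unifE d (disc d f i)) :=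
          sum_fhat_sq_low_not_subset_le hΔ k J hη hJ
      _ ≤ 3 ^ k / 4 * (η * K) := by gcongr
      _ = K / 12 * (3 ^ (k + 1) * η) := by ring
  refine le_trans ?_ (add_le_add hhigh hlow)
  simp only [sum_filter, ← sum_add_distrib]
  refine sum_le_sum fun S _ => ?_
  split_ifs with hS
  all_goals first
    | positivity
    | linarith [sq_nonneg (fhat d f S)]
    | exact absurd ⟨fun hJS => hS ⟨hJS, by omega⟩, by omega⟩ ‹¬(¬S ⊆ J ∧ _)›

lemma unifE_sq_sub_sum_fhat_chi (f : (Fin d → Bool) → ℝ) (s : Finset (Finset (Fin d))) :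
    unifE d (fun x => (f x - ∑ S ∈ s, fhat d f S * chi d S x) ^ 2) = ∑ S ∈ sᶜ, fhat d f S ^ 2 := by
  have hrest : ∀ x, f x - ∑ S ∈ s, fhat d f S * chi d S x = ∑ S ∈ sᶜ, fhat d f S * chi d S x :=
    fun x => by rw [← fourier_expansion f x, ← sum_compl_add_sum s]; ring
  simp only [hrest]
  exact unifE_sq_sum_chi _ _

end Concentration

lemma card_filter_le_sum_div {ι : Type*} [Fintype ι] {a : ι → ℝ} (ha : ∀ i, 0 ≤ a i) {δ : ℝ}
    (hδ : 0 < δ) : (#(univ.filter fun i => δ ≤ a i) : ℝ) ≤ (∑ i, a i) / δ := by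
  rw [le_div_iff₀ hδ, ← nsmul_eq_mul]
  exact (card_nsmul_le_sum _ _ _ fun i hi => (mem_filter.1 hi).2).trans
    (sum_le_sum_of_subset_of_nonneg (filter_subset _ _) fun i _ _ => ha i)

theorem stmt19_general (d : ℕ) (f : (Fin d → Bool) → ℝ) (K ε γ : ℝ)
    (hf : ∀ x, f x ∈ Set.Icc (0 : ℝ) 1) (hmono : BMono d f)
    (hK : 1 ≤ K) (hI : (∑ i : Fin d, unifE d (fun x => disc d f i x)) ≤ K)
    (hε : ε ∈ Set.Ioc (0 : ℝ) (1 / 2))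
    (d0 : ℕ) (hd0 : d0 = ⌈K / (2 * ε)⌉₊)
    (δ : ℝ) (hδ : δ = Real.exp (-γ * d0))
    (h1 : K / (4 * d0) ≤ ε / 2)
    (h2 : (K / 12) * (3 * Real.exp (-γ / 2)) ^ d0 ≤ ε / 2)
    (J : Finset (Fin d))
    (hJ : J = Finset.univ.filter (fun i : Fin d => δ ≤ unifE d (fun x => disc d f i x)))
    (g : (Fin d → Bool) → ℝ)
    (hg : g = fun x => ∑ S ∈ Finset.univ.filter
        (fun S : Finset (Fin d) => S ⊆ J ∧ S.card ≤ d0), fhat d f S * chi d S x) :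
    unifE d (fun x => (f x - g x) ^ 2) ≤ ε ∧
    (∀ x y : Fin d → Bool, (∀ i ∈ J, x i = y i) → g x = g y) ∧
    (J.card : ℝ) ≤ K * Real.exp (γ * d0) := by
  have hΔ := disc_mem_Icc hf hmono
  obtain ⟨k, rfl⟩ : ∃ k, d0 = k + 1 := Nat.exists_eq_add_one_of_ne_zero <| by
    rw [hd0, ← Nat.pos_iff_ne_zero, Nat.ceil_pos]
    exact div_pos (by linarith) (by linarith [hε.1])
  rw [mul_pow] at h2
  set η := Real.exp (-γ / 2) ^ (k + 1)
  have hηδ : η ^ 2 = δ := by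
    rw [hδ, ← pow_mul, ← Real.exp_nat_mul]
    push_cast
    ring_nf
  have hJc : ∀ i ∉ J, unifE d (disc d f i) ≤ η ^ 2 := fun i hi => by
    simp only [hJ, mem_filter, mem_univ, true_and, not_le] at hi
    exact hηδ ▸ hi.le
  refine ⟨?_, fun x y hxy => ?_, ?_⟩
  · subst hg
    beta_reduce
    rw [unifE_sq_sub_sum_fhat_chi, compl_filter]
    refine (sum_fhat_sq_not_low_subset_le hΔ hI k J (by positivity) hJc).trans ?_
    push_cast at h1
    linarith
  · rw [hg]
    exact dependsOn_sum_chi (J := (J : Set (Fin d)))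
      (fun S hS => coe_subset.2 (mem_filter.1 hS).2.1) _ hxy
  · calc (J.card : ℝ) ≤ (∑ i, unifE d (disc d f i)) / δ :=
          hJ ▸ card_filter_le_sum_div (fun i => unifE_nonneg fun x => (hΔ i x).1)
            (hδ ▸ Real.exp_pos _)
      _ ≤ K / δ := by gcongr; exact hδ ▸ (Real.exp_pos _).le
      _ = K * Real.exp (γ * ↑(k + 1)) := by rw [hδ, neg_mul, Real.exp_neg, div_inv_eq_mul]

theorem stmt19 (d : ℕ) (f : (Fin d → Bool) → ℝ) (K ε γ : ℝ)
    (hf : ∀ x, f x ∈ Set.Icc (0 : ℝ) 1) (hmono : BMono d f)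
    (hK : 1 ≤ K) (hI : (∑ i : Fin d, unifE d (fun x => disc d f i x)) ≤ K)
    (hε : ε ∈ Set.Ioc (0 : ℝ) (1 / 2)) (hγ : 2 * Real.log 3 < γ)
    (d0 : ℕ) (hd0 : d0 = ⌈K / (2 * ε)⌉₊)
    (δ : ℝ) (hδ : δ = Real.exp (-γ * d0))
    (h1 : K / (4 * d0) ≤ ε / 2)
    (h2 : (K / 12) * (3 * Real.exp (-γ / 2)) ^ d0 ≤ ε / 2)
    (J : Finset (Fin d))
    (hJ : J = Finset.univ.filter (fun i : Fin d => δ ≤ unifE d (fun x => disc d f i x)))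
    (g : (Fin d → Bool) → ℝ)
    (hg : g = fun x => ∑ S ∈ Finset.univ.filter
        (fun S : Finset (Fin d) => S ⊆ J ∧ S.card ≤ d0), fhat d f S * chi d S x) :
    unifE d (fun x => (f x - g x) ^ 2) ≤ ε ∧
    (∀ x y : Fin d → Bool, (∀ i ∈ J, x i = y i) → g x = g y) ∧
    (J.card : ℝ) ≤ K * Real.exp (γ * d0) :=
  stmt19_general d f K ε γ hf hmono hK hI hε d0 hd0 δ hδ h1 h2 J hJ g hg
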